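/- Relaxed smoothness version of the bias bound: if L : ℝ^d → ℝ is twice continuously differentiable and its Hessian ∇²L is M-Lipschitz (‖∇²L(x) − ∇²L(y)‖ ≤ M·‖x − y‖ in operator norm for all x, y), then for every θ ∈ ℝ^d and c > 0 the two-query gradient estimator satisfies ‖E[ĝ(θ,c)] − ∇L(θ)‖ ≤ (M·c²/2)·E[‖Δ‖³·‖φ(Δ)‖]; in particular the bias is still O(c²). -/

import Mathlib

/-!
On the line `p s = L (θ + s • Δ)` the Lipschitz bound on the Hessian makes `p''` Lipschitz with
constant `M ‖Δ‖³`. Hence `p' s + p' (-s) - 2 p' 0` has derivative of size at most `2 M ‖Δ‖³ s`, so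
is itself at most `M ‖Δ‖³ s²`, and integrating once more gives
`|p c - p (-c) - 2 c p' 0| ≤ M ‖Δ‖³ c³ / 3`, i.e. the central difference quotient is within
`M ‖Δ‖³ c² / 6` of `p' 0 = ⟪∇L θ, Δ⟫`.
In expectation, `E[φ(Δ) Δᵀ] = I` turns the linear term `⟪∇L θ, Δ⟫ φ(Δ)` into `∇L θ`, and the noise
term `(ε⁺ − ε⁻) φ(Δ)` has mean zero because `φ(Δ)` is `σ(Δ)`-measurable; only the Taylor remainder
of the central difference is left.
-/

open MeasureTheory Filter Topology

theorem norm_image_le_of_norm_deriv_le_mul_pow {E : Type*} [NormedAddCommGroup E]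
    [NormedSpace ℝ E] {f f' : ℝ → E} {K : ℝ} {n : ℕ} (hf : ∀ t, HasDerivAt f (f' t) t)
    (hf0 : f 0 = 0) (hbound : ∀ t, 0 ≤ t → ‖f' t‖ ≤ K * t ^ n) {t : ℝ} (ht : 0 ≤ t) :
    ‖f t‖ ≤ K * t ^ (n + 1) / (n + 1) := by
  have hB : ∀ s : ℝ, HasDerivAt (fun s => K * s ^ (n + 1) / (n + 1)) (K * s ^ n) s := fun s =>
    (((hasDerivAt_pow (n + 1) s).const_mul K).div_const _).congr_deriv (by
      push_cast
      field_simp)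
  exact image_norm_le_of_norm_deriv_right_le_deriv_boundary
    (fun s _ => (hf s).continuousAt.continuousWithinAt) (fun s _ => (hf s).hasDerivWithinAt)
    (by simp [hf0]) hB (fun s hs => hbound s hs.1) ⟨ht, le_rfl⟩

theorem abs_central_difference_sub_le_of_lipschitz_deriv2 {p p' p'' : ℝ → ℝ} {K : ℝ}
    (hp : ∀ t, HasDerivAt p (p' t) t) (hp' : ∀ t, HasDerivAt p' (p'' t) t)
    (hK : ∀ s t, |p'' s - p'' t| ≤ K * |s - t|) {t : ℝ} (ht : 0 ≤ t) :
    |p t - p (-t) - 2 * t * p' 0| ≤ K * t ^ 3 / 3 := by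
  have hneg : ∀ {q q' : ℝ → ℝ}, (∀ s, HasDerivAt q (q' s) s) →
      ∀ s, HasDerivAt (fun s => q (-s)) (-q' (-s)) s := fun hq s => by
    have := (hq (-s)).comp s (hasDerivAt_neg s)
    rwa [mul_neg_one] at this
  have hderiv : ∀ s, 0 ≤ s → ‖p' s + p' (-s) - 2 * p' 0‖ ≤ K * s ^ 2 := fun s hs => by
    refine (norm_image_le_of_norm_deriv_le_mul_pow (K := 2 * K) (n := 1)
      (f := fun s => p' s + p' (-s) - 2 * p' 0) (f' := fun s => p'' s - p'' (-s))
      (fun s => (((hp' s).fun_add (hneg hp' s)).sub_const _).congr_deriv (by ring))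
      (by rw [neg_zero]; ring) (fun s hs => ?_) hs).trans_eq (by push_cast; ring)
    calc ‖p'' s - p'' (-s)‖ ≤ K * |s - -s| := hK s (-s)
      _ = 2 * K * s ^ 1 := by rw [sub_neg_eq_add, abs_of_nonneg (by linarith)]; ring
  refine (norm_image_le_of_norm_deriv_le_mul_pow (K := K) (n := 2)
    (f := fun s => p s - p (-s) - 2 * s * p' 0) (f' := fun s => p' s + p' (-s) - 2 * p' 0)
    (fun s => (((hp s).fun_sub (hneg hp s)).fun_sub
      (((hasDerivAt_id s).const_mul 2).mul_const (p' 0))).congr_deriv (by simp))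
    (by simp) hderiv ht).trans_eq (by push_cast; ring)

section LineRestriction

variable {E F : Type*} [NormedAddCommGroup E] [NormedSpace ℝ E] [NormedAddCommGroup F]
  [NormedSpace ℝ F]

theorem hasDerivAt_comp_add_smul {f : E → F} {x v : E} {t : ℝ}
    (hf : DifferentiableAt ℝ f (x + t • v)) :
    HasDerivAt (fun s : ℝ => f (x + s • v)) (fderiv ℝ f (x + t • v) v) t := by
  have h := hf.hasFDerivAt.comp_hasDerivAt t (((hasDerivAt_id t).smul_const v).const_add x)
  rwa [one_smul] at h

theorem hasDerivAt_fderiv_comp_add_smul_apply {L : E → ℝ} (hL : ContDiff ℝ 2 L) (x v : E) (t : ℝ) :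
    HasDerivAt (fun s : ℝ => fderiv ℝ L (x + s • v) v)
      (iteratedFDeriv ℝ 2 L (x + t • v) ![v, v]) t := by
  have hdL : ContDiff ℝ 1 (fderiv ℝ L) := hL.fderiv_right le_rfl
  have hdiff : DifferentiableAt ℝ (fderiv ℝ L) (x + t • v) := hdL.differentiable one_ne_zero _
  simpa [iteratedFDeriv_two_apply] using
    (hasDerivAt_comp_add_smul hdiff).clm_apply (hasDerivAt_const t v)

theorem abs_central_difference_quotient_sub_fderiv_le {L : E → ℝ} {M : ℝ} (hL : ContDiff ℝ 2 L)
    (hLip : ∀ x y, ‖iteratedFDeriv ℝ 2 L x - iteratedFDeriv ℝ 2 L y‖ ≤ M * ‖x - y‖)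
    (x v : E) {c : ℝ} (hc : 0 < c) :
    |(L (x + c • v) - L (x - c • v)) / (2 * c) - fderiv ℝ L x v| ≤ M * ‖v‖ ^ 3 * c ^ 2 / 6 := by
  have hK : ∀ s t : ℝ, |iteratedFDeriv ℝ 2 L (x + s • v) ![v, v]
      - iteratedFDeriv ℝ 2 L (x + t • v) ![v, v]| ≤ M * ‖v‖ ^ 3 * |s - t| := fun s t => by
    calc _ = ‖(iteratedFDeriv ℝ 2 L (x + s • v) - iteratedFDeriv ℝ 2 L (x + t • v)) ![v, v]‖ := rfl
      _ ≤ ‖iteratedFDeriv ℝ 2 L (x + s • v) - iteratedFDeriv ℝ 2 L (x + t • v)‖ * (‖v‖ * ‖v‖) := by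
        simpa [Fin.prod_univ_two] using
          (iteratedFDeriv ℝ 2 L (x + s • v) - iteratedFDeriv ℝ 2 L (x + t • v)).le_opNorm ![v, v]
      _ ≤ M * ‖(s - t) • v‖ * (‖v‖ * ‖v‖) := by
        gcongr
        simpa [sub_smul] using hLip (x + s • v) (x + t • v)
      _ = M * ‖v‖ ^ 3 * |s - t| := by rw [norm_smul, Real.norm_eq_abs]; ring
  have hdiff : ∀ t : ℝ, DifferentiableAt ℝ L (x + t • v) := fun t =>
    hL.differentiable two_ne_zero _
  have := abs_central_difference_sub_le_of_lipschitz_deriv2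
    (fun t => hasDerivAt_comp_add_smul (hdiff t)) (hasDerivAt_fderiv_comp_add_smul_apply hL x v)
    hK hc.le
  simp only [zero_smul, add_zero, neg_smul, ← sub_eq_add_neg] at this
  have hquot : (L (x + c • v) - L (x - c • v)) / (2 * c) - fderiv ℝ L x v
      = (L (x + c • v) - L (x - c • v) - 2 * c * fderiv ℝ L x v) / (2 * c) := by
    field_simp
  rw [hquot, abs_div, abs_of_pos (by positivity : (0 : ℝ) < 2 * c), div_le_iff₀ (by positivity)]
  linarith

theorem norm_central_difference_remainder_smul_le {L : E → ℝ} {M : ℝ} (hL : ContDiff ℝ 2 L)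
    (hLip : ∀ x y, ‖iteratedFDeriv ℝ 2 L x - iteratedFDeriv ℝ 2 L y‖ ≤ M * ‖x - y‖)
    (x v : E) (w : F) {c : ℝ} (hc : 0 < c) :
    ‖((L (x + c • v) - L (x - c • v)) / (2 * c) - fderiv ℝ L x v) • w‖
      ≤ M * c ^ 2 / 6 * (‖v‖ ^ 3 * ‖w‖) := by
  rw [norm_smul, Real.norm_eq_abs]
  exact (mul_le_mul_of_nonneg_right (abs_central_difference_quotient_sub_fderiv_le hL hLip x v hc)
    (norm_nonneg w)).trans_eq (by ring)

end LineRestriction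

section SecondMoments

variable {Ω ι : Type*} {m0 : MeasurableSpace Ω} {μ : Measure Ω} [Fintype ι]
  {X Y : Ω → EuclideanSpace ℝ ι}

theorem inner_smul_apply_eq_sum (v x y : EuclideanSpace ℝ ι) (i : ι) :
    (inner ℝ v x • y) i = ∑ j, v j * (y i * x j) := by
  simp only [PiLp.smul_apply, PiLp.inner_apply, RCLike.inner_apply, conj_trivial, smul_eq_mul,
    Finset.sum_mul]
  exact Finset.sum_congr rfl fun j _ => by ring

theorem integrable_inner_smul (hXY : ∀ i j, Integrable (fun ω => Y ω i * X ω j) μ)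
    (v : EuclideanSpace ℝ ι) : Integrable (fun ω => inner ℝ v (X ω) • Y ω) μ :=
  integrable_piLp_iff.2 fun i => by
    simp_rw [inner_smul_apply_eq_sum]
    exact integrable_finsetSum _ fun j _ => (hXY i j).const_mul _

theorem integral_inner_smul_eq_self [DecidableEq ι]
    (hXY_int : ∀ i j, Integrable (fun ω => Y ω i * X ω j) μ)
    (hXY : ∀ i j, ∫ ω, Y ω i * X ω j ∂μ = if i = j then 1 else 0) (v : EuclideanSpace ℝ ι) :
    ∫ ω, inner ℝ v (X ω) • Y ω ∂μ = v := by
  ext i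
  rw [eval_integral_piLp (integrable_piLp_iff.1 (integrable_inner_smul hXY_int v))]
  simp_rw [inner_smul_apply_eq_sum]
  rw [integral_finsetSum _ fun j _ => (hXY_int i j).const_mul _]
  simp [integral_const_mul, hXY]

end SecondMoments

theorem integral_smul_eq_zero_of_condExp_eq_zero {Ω E : Type*} {m m0 : MeasurableSpace Ω}
    {μ : Measure Ω} [IsFiniteMeasure μ] [NormedAddCommGroup E] [NormedSpace ℝ E] [CompleteSpace E]
    (hm : m ≤ m0) {g : Ω → ℝ} {Y : Ω → E} (hg : Integrable g μ) (hgY : Integrable (g • Y) μ)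
    (hY : AEStronglyMeasurable[m] Y μ) (hcond : μ[g | m] =ᵐ[μ] 0) :
    ∫ ω, g ω • Y ω ∂μ = 0 := by
  have : IsFiniteMeasure (μ.trim hm) := isFiniteMeasure_trim hm
  calc ∫ ω, g ω • Y ω ∂μ = ∫ ω, (μ[g • Y | m]) ω ∂μ := (integral_condExp hm).symm
    _ = ∫ ω, (μ[g | m] • Y) ω ∂μ :=
      integral_congr_ae (condExp_smul_of_aestronglyMeasurable_right hg hgY hY)
    _ = 0 := by
      rw [integral_eq_zero_of_ae]
      filter_upwards [hcond] with ω hω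
      simp [hω]

section CentralDifferenceEstimator

variable {Ω ι : Type*} {m0 : MeasurableSpace Ω} {μ : Measure Ω} [Fintype ι]
  {L : EuclideanSpace ℝ ι → ℝ} {M : ℝ} {X Y : Ω → EuclideanSpace ℝ ι} {θ : EuclideanSpace ℝ ι}
  {c : ℝ}

theorem central_difference_smul_eq_inner_gradient_smul_add (θ x y : EuclideanSpace ℝ ι)
    (q : ℝ) : q • y = inner ℝ (gradient L θ) x • y + (q - fderiv ℝ L θ x) • y := by
  rw [← toDual_gradient, InnerProductSpace.toDual_apply_apply, ← add_smul, add_sub_cancel]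

theorem integrable_central_difference_remainder_smul (hL : ContDiff ℝ 2 L)
    (hLip : ∀ x y, ‖iteratedFDeriv ℝ 2 L x - iteratedFDeriv ℝ 2 L y‖ ≤ M * ‖x - y‖)
    (hX : Measurable X) (hY : Measurable Y)
    (hmom : Integrable (fun ω => ‖X ω‖ ^ 3 * ‖Y ω‖) μ) (hc : 0 < c) :
    Integrable (fun ω =>
      ((L (θ + c • X ω) - L (θ - c • X ω)) / (2 * c) - fderiv ℝ L θ (X ω)) • Y ω) μ := by
  have := hL.continuous.measurable
  have := (fderiv ℝ L θ).continuous.measurable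
  exact (hmom.const_mul _).mono' (by fun_prop) (ae_of_all _ fun ω =>
    norm_central_difference_remainder_smul_le hL hLip θ (X ω) (Y ω) hc)

theorem integrable_central_difference_smul (hL : ContDiff ℝ 2 L)
    (hLip : ∀ x y, ‖iteratedFDeriv ℝ 2 L x - iteratedFDeriv ℝ 2 L y‖ ≤ M * ‖x - y‖)
    (hX : Measurable X) (hY : Measurable Y)
    (hXY : ∀ i j, Integrable (fun ω => Y ω i * X ω j) μ)
    (hmom : Integrable (fun ω => ‖X ω‖ ^ 3 * ‖Y ω‖) μ) (hc : 0 < c) :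
    Integrable (fun ω => ((L (θ + c • X ω) - L (θ - c • X ω)) / (2 * c)) • Y ω) μ := by
  exact ((integrable_inner_smul hXY _).add
    (integrable_central_difference_remainder_smul hL hLip hX hY hmom hc)).congr
    (ae_of_all _ fun ω => (central_difference_smul_eq_inner_gradient_smul_add θ (X ω) (Y ω) _).symm)

theorem norm_integral_central_difference_smul_sub_gradient_le [DecidableEq ι]
    (hL : ContDiff ℝ 2 L)
    (hLip : ∀ x y, ‖iteratedFDeriv ℝ 2 L x - iteratedFDeriv ℝ 2 L y‖ ≤ M * ‖x - y‖)
    (hX : Measurable X) (hY : Measurable Y)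
    (hXY_int : ∀ i j, Integrable (fun ω => Y ω i * X ω j) μ)
    (hXY : ∀ i j, ∫ ω, Y ω i * X ω j ∂μ = if i = j then 1 else 0)
    (hmom : Integrable (fun ω => ‖X ω‖ ^ 3 * ‖Y ω‖) μ) (hc : 0 < c) :
    ‖∫ ω, ((L (θ + c • X ω) - L (θ - c • X ω)) / (2 * c)) • Y ω ∂μ - gradient L θ‖
      ≤ M * c ^ 2 / 6 * ∫ ω, ‖X ω‖ ^ 3 * ‖Y ω‖ ∂μ := by
  have hrem := integrable_central_difference_remainder_smul (θ := θ) hL hLip hX hY hmom hc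
  rw [integral_congr_ae (ae_of_all _ fun ω =>
      central_difference_smul_eq_inner_gradient_smul_add θ (X ω) (Y ω) _),
    integral_add (integrable_inner_smul hXY_int _) hrem, integral_inner_smul_eq_self hXY_int hXY,
    add_sub_cancel_left, ← integral_const_mul]
  exact (norm_integral_le_integral_norm _).trans (integral_mono hrem.norm (hmom.const_mul _)
    fun ω => norm_central_difference_remainder_smul_le hL hLip θ (X ω) (Y ω) hc)

end CentralDifferenceEstimator

theorem bias_bound_of_two_query_gradient_estimator_of_lipschitz_hessian_general
    (d : ℕ)
    (L : EuclideanSpace ℝ (Fin d) → ℝ)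
    (M : ℝ) (hM : 0 ≤ M)
    (hL : ContDiff ℝ 2 L)
    (hLip : ∀ x y, ‖iteratedFDeriv ℝ 2 L x - iteratedFDeriv ℝ 2 L y‖ ≤ M * ‖x - y‖)
    {Ω : Type*} {m0 : MeasurableSpace Ω} (μ : Measure Ω) [IsProbabilityMeasure μ]
    (Δ : Ω → EuclideanSpace ℝ (Fin d)) (hΔ : Measurable Δ)
    (φ : EuclideanSpace ℝ (Fin d) → EuclideanSpace ℝ (Fin d)) (hφ : Measurable φ)
    -- `E[φ(Δ) Δᵀ] = I`
    (hid_int : ∀ i j : Fin d, Integrable (fun ω => φ (Δ ω) i * Δ ω j) μ)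
    (hid : ∀ i j : Fin d, ∫ ω, φ (Δ ω) i * Δ ω j ∂μ = if i = j then (1 : ℝ) else 0)
    -- integrable noises with `E[ε⁺ − ε⁻ | Δ] = 0` a.s.
    (εp εm : Ω → ℝ) (hεp : Integrable εp μ) (hεm : Integrable εm μ)
    (hnoise : μ[fun ω => εp ω - εm ω|MeasurableSpace.comap Δ inferInstance] =ᵐ[μ] 0)
    -- the two-query gradient estimator
    (ghat : EuclideanSpace ℝ (Fin d) → ℝ → Ω → EuclideanSpace ℝ (Fin d))
    (hghat : ∀ θ c ω, ghat θ c ω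
      = ((L (θ + c • Δ ω) + εp ω - L (θ - c • Δ ω) - εm ω) / (2 * c)) • φ (Δ ω))
    -- finite moment `E[‖Δ‖³ ‖φ(Δ)‖] < ∞`
    (hmom_int : Integrable (fun ω => ‖Δ ω‖ ^ 3 * ‖φ (Δ ω)‖) μ)
    (θ : EuclideanSpace ℝ (Fin d)) (c : ℝ) (hc : 0 < c)
    (hint : Integrable (ghat θ c) μ) :
    ‖(∫ ω, ghat θ c ω ∂μ) - gradient L θ‖
      ≤ (M * c ^ 2 / 2) * ∫ ω, ‖Δ ω‖ ^ 3 * ‖φ (Δ ω)‖ ∂μ := by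
  set noise := fun ω => (εp ω - εm ω) • φ (Δ ω)
  have hdecomp : ∀ ω, ghat θ c ω
      = ((L (θ + c • Δ ω) - L (θ - c • Δ ω)) / (2 * c)) • φ (Δ ω) + (2 * c)⁻¹ • noise ω :=
    fun ω => by
      rw [hghat, smul_smul, ← add_smul]
      congr 1
      field_simp
      ring
  have hq_int := integrable_central_difference_smul (θ := θ) (Y := fun ω => φ (Δ ω)) hL hLip hΔ
    (hφ.comp hΔ) hid_int hmom_int hc
  have hnoise_int : Integrable noise μ := by
    refine (integrable_fun_smul_iff (inv_ne_zero (by positivity : 2 * c ≠ 0)) noise).1 ?_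
    convert hint.sub hq_int using 1
    funext ω
    simp [hdecomp]
  have hnoise_zero : ∫ ω, noise ω ∂μ = 0 :=
    integral_smul_eq_zero_of_condExp_eq_zero hΔ.comap_le (hεp.sub hεm) hnoise_int
      (hφ.comp (comap_measurable Δ)).aestronglyMeasurable hnoise
  rw [integral_congr_ae (ae_of_all _ hdecomp), integral_add hq_int (hnoise_int.fun_smul (2 * c)⁻¹),
    integral_smul, hnoise_zero, smul_zero, add_zero]
  calc _ ≤ M * c ^ 2 / 6 * ∫ ω, ‖Δ ω‖ ^ 3 * ‖φ (Δ ω)‖ ∂μ :=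
        norm_integral_central_difference_smul_sub_gradient_le hL hLip hΔ (hφ.comp hΔ) hid_int hid
          hmom_int hc
    _ ≤ M * c ^ 2 / 2 * ∫ ω, ‖Δ ω‖ ^ 3 * ‖φ (Δ ω)‖ ∂μ := by
      gcongr
      norm_num

/-- relaxed smoothness version of the bias bound: if `L` is twice
continuously differentiable with `M`-Lipschitz Hessian, then
`‖E[ĝ(θ,c)] − ∇L(θ)‖ ≤ (M c²/2) E[‖Δ‖³ ‖φ(Δ)‖]` for every `θ` and `c > 0`. -/
theorem bias_bound_of_two_query_gradient_estimator_of_lipschitz_hessian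
    (d : ℕ) (hd : 1 ≤ d)
    (L : EuclideanSpace ℝ (Fin d) → ℝ)
    (M : ℝ) (hM : 0 ≤ M)
    (hL : ContDiff ℝ 2 L)
    (hLip : ∀ x y, ‖iteratedFDeriv ℝ 2 L x - iteratedFDeriv ℝ 2 L y‖ ≤ M * ‖x - y‖)
    {Ω : Type*} {m0 : MeasurableSpace Ω} (μ : Measure Ω) [IsProbabilityMeasure μ]
    (Δ : Ω → EuclideanSpace ℝ (Fin d)) (hΔ : Measurable Δ)
    (φ : EuclideanSpace ℝ (Fin d) → EuclideanSpace ℝ (Fin d)) (hφ : Measurable φ)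
    -- `E[φ(Δ) Δᵀ] = I`
    (hid_int : ∀ i j : Fin d, Integrable (fun ω => φ (Δ ω) i * Δ ω j) μ)
    (hid : ∀ i j : Fin d, ∫ ω, φ (Δ ω) i * Δ ω j ∂μ = if i = j then (1 : ℝ) else 0)
    -- integrable noises with `E[ε⁺ − ε⁻ | Δ] = 0` a.s.
    (εp εm : Ω → ℝ) (hεp : Integrable εp μ) (hεm : Integrable εm μ)
    (hnoise : μ[fun ω => εp ω - εm ω|MeasurableSpace.comap Δ inferInstance] =ᵐ[μ] 0)
    -- the two-query gradient estimator
    (ghat : EuclideanSpace ℝ (Fin d) → ℝ → Ω → EuclideanSpace ℝ (Fin d))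
    (hghat : ∀ θ c ω, ghat θ c ω
      = ((L (θ + c • Δ ω) + εp ω - L (θ - c • Δ ω) - εm ω) / (2 * c)) • φ (Δ ω))
    -- finite moment `E[‖Δ‖³ ‖φ(Δ)‖] < ∞`
    (hmom_int : Integrable (fun ω => ‖Δ ω‖ ^ 3 * ‖φ (Δ ω)‖) μ)
    (θ : EuclideanSpace ℝ (Fin d)) (c : ℝ) (hc : 0 < c)
    (hint : Integrable (ghat θ c) μ) :
    ‖(∫ ω, ghat θ c ω ∂μ) - gradient L θ‖
      ≤ (M * c ^ 2 / 2) * ∫ ω, ‖Δ ω‖ ^ 3 * ‖φ (Δ ω)‖ ∂μ :=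
  bias_bound_of_two_query_gradient_estimator_of_lipschitz_hessian_general d L M hM hL hLip
    (m0 := m0) μ Δ hΔ φ hφ hid_int hid εp εm hεp hεm hnoise ghat hghat hmom_int θ c hc hint
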